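/- The Choquet integral with respect to H^α_μ is countably sublinear: for any sequence of nonnegative functions f_j on K, ∫_K Σ_j f_j dH^α_μ ≤ Σ_j ∫_K f_j dH^α_μ. -/

import Mathlib

open MeasureTheory Set Filter
open scoped ENNReal NNReal Topology

noncomputable section

abbrev Pt (d : ℕ) := EuclideanSpace ℝ (Fin d)

/-- An iterated function system of contractive similitudes on ℝ^d with attractor `K`
satisfying the strong separation condition. -/
structure IFS (d m : ℕ) where
  S : Fin m → Pt d → Pt d
  r : Fin m → ℝ
  r_pos : ∀ i, 0 < r i
  r_lt_one : ∀ i, r i < 1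
  similitude : ∀ i x y, dist (S i x) (S i y) = r i * dist x y
  K : Set (Pt d)
  K_nonempty : K.Nonempty
  K_compact : IsCompact K
  K_invariant : K = ⋃ i, S i '' K
  ssc : Pairwise fun i j => Disjoint (S i '' K) (S j '' K)

namespace IFS

variable {d m : ℕ}

/-- The composition `S_{i₁} ∘ ⋯ ∘ S_{iₙ}` for the word `w = i₁ ⋯ iₙ`. -/
def cylMap (Φ : IFS d m) (w : List (Fin m)) : Pt d → Pt d :=
  w.foldr (fun i g => Φ.S i ∘ g) id

/-- The basic cube (cylinder set) `K_w = S_{i₁} ∘ ⋯ ∘ S_{iₙ}(K)`. -/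
def cyl (Φ : IFS d m) (w : List (Fin m)) : Set (Pt d) :=
  Φ.cylMap w '' Φ.K

/-- `μ` is the self-similar probability measure associated with the probability
vector `p` (with all `p i > 0`), i.e. `μ = ∑ i, p i • μ ∘ S i ⁻¹`, supported on `K`. -/
def SelfSimilar (Φ : IFS d m) (p : Fin m → ℝ≥0∞) (μ : Measure (Pt d)) : Prop :=
  (∑ i, p i = 1) ∧ (∀ i, 0 < p i) ∧ IsProbabilityMeasure μ ∧ μ Φ.K = 1 ∧
    μ = ∑ i, p i • μ.map (Φ.S i)

/-- The α-dimensional Hausdorff content on `K` associated with `μ`, defined via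
coverings by countable families of basic cubes; `s` is the Hausdorff dimension of `K`. -/
def hContent (Φ : IFS d m) (μ : Measure (Pt d)) (s α : ℝ) (E : Set (Pt d)) : ℝ≥0∞ :=
  ⨅ (C : Set (List (Fin m))) (_ : C.Countable) (_ : E ⊆ ⋃ w ∈ C, Φ.cyl w),
    ∑' w : C, μ (Φ.cyl w.1) ^ (α / s)

/-- The dyadic-type Hardy–Littlewood maximal operator over basic cubes containing `x`. -/
def maxOp (Φ : IFS d m) (μ : Measure (Pt d)) (f : Pt d → ℝ) (x : Pt d) : ℝ≥0∞ :=
  ⨆ (w : List (Fin m)) (_ : x ∈ Φ.cyl w),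
    (μ (Φ.cyl w))⁻¹ * ∫⁻ y in Φ.cyl w, ENNReal.ofReal |f y| ∂μ

end IFS

/-- The Choquet integral of `g` over `E` with respect to the monotone set function `ν`. -/
def choquetInt {X : Type*} (ν : Set X → ℝ≥0∞) (E : Set X) (g : X → ℝ≥0∞) : ℝ≥0∞ :=
  ∫⁻ t in Set.Ioi (0 : ℝ), ν {x ∈ E | ENNReal.ofReal t < g x}

/-- `log⁺ t = max (0, log t)`. -/
def posLog (t : ℝ) : ℝ := max 0 (Real.log t)

/-!
The basic cubes form a tree under inclusion: by the strong separation condition two cubes that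
meet are nested. Let `F ≤ ∑ i, c i • 𝟙 K_{q i}` on `K`. For each level `t`, the set `{F > t}` is
covered by the cubes `K_u` at which the weight accumulated along the branch from the root to `u`
first exceeds `t`; the cube `K_u` serves in this way for a set of levels of length at most the
weight sitting at `u` itself. Integrating over `t`, the Choquet integral of `F` is at most
`∑ i, c i * μ(K_{q i})^(α/s)`. Conversely each `g j` is dominated by such a family whose cost
exceeds its Choquet integral by at most a prescribed `σ j`. Summing these families over `j`
gives the countable sublinearity.
-/

namespace List

variable {β : Type*}

theorem IsPrefix.prefix_dropLast {v l : List β} (h : v <+: l) (hne : v ≠ l) :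
    v <+: l.dropLast := by
  obtain ⟨r, rfl⟩ := h
  have hr : r ≠ [] := by rintro rfl; simp at hne
  rw [dropLast_append_of_ne_nil hr]
  exact prefix_append _ _

theorem exists_minimal_prefix (P : List β → Prop) {u : List β} (hu : P u) :
    ∃ v, v <+: u ∧ P v ∧ (v ≠ [] → ¬ P v.dropLast) := by
  induction u using reverseRecOn with
  | nil => exact ⟨[], prefix_rfl, hu, fun h => (h rfl).elim⟩
  | append_singleton l a ih =>
    by_cases hl : P l
    · obtain ⟨v, hvl, hv, hmin⟩ := ih hl
      exact ⟨v, hvl.trans (prefix_append _ _), hv, hmin⟩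
    · exact ⟨l ++ [a], prefix_rfl, hu, fun _ => by rwa [dropLast_concat]⟩

end List

section PrefixWeight

variable {β ι : Type*} (q : ι → List β) (c : ι → ℝ≥0∞)

open Classical in
def prefixWeight (u : List β) : ℝ≥0∞ := ∑' i, if q i <+: u then c i else 0

open Classical in
def strictPrefixWeight (u : List β) : ℝ≥0∞ := ∑' i, if q i <+: u ∧ q i ≠ u then c i else 0

open Classical in
def wordWeight (u : List β) : ℝ≥0∞ := ∑' i, if q i = u then c i else 0

theorem prefixWeight_eq_add (u : List β) :
    prefixWeight q c u = strictPrefixWeight q c u + wordWeight q c u := by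
  rw [prefixWeight, strictPrefixWeight, wordWeight, ← ENNReal.tsum_add]
  refine tsum_congr fun i => ?_
  by_cases h : q i = u <;> simp [h, ite_and]

theorem strictPrefixWeight_nil : strictPrefixWeight q c [] = 0 := by
  simp [strictPrefixWeight]

theorem strictPrefixWeight_le_dropLast (u : List β) :
    strictPrefixWeight q c u ≤ prefixWeight q c u.dropLast := by
  refine ENNReal.tsum_le_tsum fun i => ?_
  split_ifs with h h'
  · exact le_rfl
  · exact absurd (h.1.prefix_dropLast h.2) h'
  all_goals exact zero_le

theorem tsum_mul_wordWeight (f : List β → ℝ≥0∞) :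
    ∑' u, f u * wordWeight q c u = ∑' i, c i * f (q i) := by
  simp_rw [wordWeight, ← ENNReal.tsum_mul_left]
  rw [ENNReal.tsum_comm]
  refine tsum_congr fun i => ?_
  rw [tsum_eq_single (q i) fun u hu => by simp [Ne.symm hu]]
  simp [mul_comm]

end PrefixWeight

theorem ENNReal.volume_ofReal_preimage_Ico_inter_Ioi_le (a b : ℝ≥0∞) :
    volume (ENNReal.ofReal ⁻¹' Ico a (a + b) ∩ Ioi 0) ≤ b := by
  rcases eq_or_ne a ⊤ with rfl | ha
  · simp
  rcases eq_or_ne b ⊤ with rfl | hb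
  · exact le_top
  have hab : a + b ≠ ⊤ := ENNReal.add_ne_top.2 ⟨ha, hb⟩
  calc volume (ENNReal.ofReal ⁻¹' Ico a (a + b) ∩ Ioi 0)
      ≤ volume (Ico a.toReal (a + b).toReal) := by
        refine measure_mono fun t ⟨⟨hat, htb⟩, ht⟩ => ⟨?_, ?_⟩
        · exact ENNReal.toReal_le_of_le_ofReal (le_of_lt ht) hat
        · exact (ENNReal.ofReal_lt_iff_lt_toReal (le_of_lt ht) hab).1 htb
    _ = b := by
        rw [Real.volume_Ico, ENNReal.toReal_add ha hb, add_sub_cancel_left,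
          ENNReal.ofReal_toReal hb]

theorem Antitone.tsum_ofReal_mul_le_lintegral_Ioi {φ : ℝ → ℝ≥0∞} (hφ : Antitone φ)
    {ε : ℝ} (hε : 0 ≤ ε) :
    ∑' k : ℕ, ENNReal.ofReal ε * φ (ε * (k + 1)) ≤ ∫⁻ t in Ioi 0, φ t := by
  have hmono : Monotone fun k : ℕ => ε * k := fun i j h => by
    dsimp only; gcongr
  have hdisj := hmono.pairwise_disjoint_on_Ioc_succ
  simp only [Order.succ_eq_add_one, Nat.cast_add, Nat.cast_one] at hdisj
  calc ∑' k : ℕ, ENNReal.ofReal ε * φ (ε * (k + 1))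
      ≤ ∑' k : ℕ, ∫⁻ t in Ioc (ε * k) (ε * (k + 1)), φ t := by
        refine ENNReal.tsum_le_tsum fun k => ?_
        calc ENNReal.ofReal ε * φ (ε * (k + 1))
            = ∫⁻ _ in Ioc (ε * k) (ε * (k + 1)), φ (ε * (k + 1)) := by
              rw [setLIntegral_const, Real.volume_Ioc, mul_comm]
              ring_nf
          _ ≤ ∫⁻ t in Ioc (ε * k) (ε * (k + 1)), φ t :=
              setLIntegral_mono' measurableSet_Ioc fun t ht => hφ ht.2
    _ = ∫⁻ t in ⋃ k : ℕ, Ioc (ε * k) (ε * (k + 1)), φ t :=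
        (lintegral_iUnion (fun _ => measurableSet_Ioc) hdisj _).symm
    _ ≤ ∫⁻ t in Ioi 0, φ t :=
        lintegral_mono_set (iUnion_subset fun k t ht => lt_of_le_of_lt (by positivity) ht.1)

theorem ENNReal.le_tsum_ite_ofReal_mul_lt (T : ℝ≥0∞) {ε : ℝ} (hε : 0 < ε) :
    T ≤ ∑' k : ℕ, if ENNReal.ofReal (ε * k) < T then ENNReal.ofReal ε else 0 := by
  have hε' : ENNReal.ofReal ε ≠ 0 := (ENNReal.ofReal_pos.2 hε).ne'
  rcases eq_or_ne T ⊤ with rfl | hT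
  · simp [ENNReal.tsum_const_eq_top_of_ne_zero hε']
  set n := ⌈T.toReal / ε⌉₊
  calc T = ENNReal.ofReal T.toReal := (ENNReal.ofReal_toReal hT).symm
    _ ≤ ENNReal.ofReal (n * ε) :=
        ENNReal.ofReal_le_ofReal ((div_le_iff₀ hε).1 (Nat.le_ceil _))
    _ = ∑ k ∈ Finset.range n, ENNReal.ofReal ε := by
        rw [ENNReal.ofReal_mul (Nat.cast_nonneg _), ENNReal.ofReal_natCast, Finset.sum_const,
          Finset.card_range, nsmul_eq_mul]
    _ = ∑ k ∈ Finset.range n, if ENNReal.ofReal (ε * k) < T then ENNReal.ofReal ε else 0 := by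
        refine Finset.sum_congr rfl fun k hk => (if_pos ?_).symm
        have hk : ε * k < T.toReal := by
          rw [mul_comm, ← lt_div_iff₀ hε]; exact Nat.lt_ceil.1 (Finset.mem_range.1 hk)
        exact (ENNReal.ofReal_lt_iff_lt_toReal (by positivity) hT).2 hk
    _ ≤ _ := ENNReal.sum_le_tsum _

namespace IFS

variable {d m : ℕ} (Φ : IFS d m) (μ : Measure (Pt d)) (s α : ℝ)

theorem S_injective (i : Fin m) : Function.Injective (Φ.S i) := fun x y h => by
  have hxy := Φ.similitude i x y
  rw [h, dist_self, eq_comm, mul_eq_zero] at hxy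
  exact dist_eq_zero.1 (hxy.resolve_left (Φ.r_pos i).ne')

theorem cyl_nil : Φ.cyl [] = Φ.K := image_id _

theorem cyl_cons (i : Fin m) (w : List (Fin m)) : Φ.cyl (i :: w) = Φ.S i '' Φ.cyl w := by
  rw [cyl, cyl, ← image_comp]; rfl

theorem cyl_subset_K : ∀ w : List (Fin m), Φ.cyl w ⊆ Φ.K
  | [] => Φ.cyl_nil.subset
  | i :: w => by
    rw [cyl_cons, Φ.K_invariant]
    exact (image_mono (cyl_subset_K w)).trans (subset_iUnion (fun j => Φ.S j '' Φ.K) i)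

theorem cyl_anti : ∀ {v w : List (Fin m)}, v <+: w → Φ.cyl w ⊆ Φ.cyl v
  | [], w, _ => Φ.cyl_nil ▸ Φ.cyl_subset_K w
  | _ :: _, [], h => by simp at h
  | i :: v, j :: w, h => by
    obtain ⟨rfl, hvw⟩ := List.cons_prefix_cons.1 h
    rw [cyl_cons, cyl_cons]
    exact image_mono (cyl_anti hvw)

theorem prefix_or_prefix_of_mem_cyl {x : Pt d} :
    ∀ {v w : List (Fin m)}, x ∈ Φ.cyl v → x ∈ Φ.cyl w → v <+: w ∨ w <+: v
  | [], _, _, _ => Or.inl List.nil_prefix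
  | _ :: _, [], _, _ => Or.inr List.nil_prefix
  | i :: v, j :: w, hv, hw => by
    rw [cyl_cons] at hv hw
    obtain rfl : i = j := by
      by_contra hij
      exact (Φ.ssc hij).ne_of_mem (image_mono (Φ.cyl_subset_K v) hv)
        (image_mono (Φ.cyl_subset_K w) hw) rfl
    obtain ⟨y, hy, rfl⟩ := hv
    obtain ⟨y', hy', hyy'⟩ := hw
    obtain rfl := Φ.S_injective i hyy'
    simpa only [List.cons_prefix_cons, true_and] using prefix_or_prefix_of_mem_cyl hy hy'

theorem hContent_le_of_subset_iUnion {E : Set (Pt d)} {C : Set (List (Fin m))}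
    (hC : C.Countable) (hE : E ⊆ ⋃ w ∈ C, Φ.cyl w) :
    Φ.hContent μ s α E ≤ ∑' w : C, μ (Φ.cyl w) ^ (α / s) :=
  iInf₂_le_of_le C hC (iInf_le _ hE)

theorem hContent_mono : Monotone (Φ.hContent μ s α) := fun _ _ h =>
  le_iInf₂ fun _ hC => le_iInf fun hE => Φ.hContent_le_of_subset_iUnion μ s α hC (h.trans hE)

theorem hContent_K_le : Φ.hContent μ s α Φ.K ≤ μ Φ.K ^ (α / s) := by
  have hK : Φ.K ⊆ ⋃ w ∈ ({[]} : Set (List (Fin m))), Φ.cyl w := by simp [cyl_nil]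
  refine (Φ.hContent_le_of_subset_iUnion μ s α (countable_singleton _) hK).trans_eq ?_
  rw [tsum_singleton [] fun w => μ (Φ.cyl w) ^ (α / s), cyl_nil]

theorem exists_subset_iUnion_cyl_le_hContent_add {E : Set (Pt d)}
    (hE : Φ.hContent μ s α E ≠ ⊤) {δ : ℝ≥0∞} (hδ : δ ≠ 0) :
    ∃ C : Set (List (Fin m)), C.Countable ∧ E ⊆ ⋃ w ∈ C, Φ.cyl w ∧
      ∑' w : C, μ (Φ.cyl w) ^ (α / s) ≤ Φ.hContent μ s α E + δ := by
  obtain ⟨C, hC⟩ := iInf_lt_iff.1 (ENNReal.lt_add_right hE hδ)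
  obtain ⟨hCc, hC⟩ := iInf_lt_iff.1 hC
  obtain ⟨hCE, hC⟩ := iInf_lt_iff.1 hC
  exact ⟨C, hCc, hCE, hC.le⟩

section WeightedCubes

variable {ι : Type*} (q : ι → List (Fin m)) (c : ι → ℝ≥0∞)

theorem exists_mem_cyl_lt_prefixWeight {x : Pt d} {t : ℝ≥0∞}
    (ht : t < ∑' i, (Φ.cyl (q i)).indicator (fun _ => c i) x) :
    ∃ u, x ∈ Φ.cyl u ∧ t < prefixWeight q c u := by
  classical
  rw [ENNReal.tsum_eq_iSup_sum, lt_iSup_iff] at ht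
  obtain ⟨s₀, hs₀⟩ := ht
  simp only [indicator_apply, ← Finset.sum_filter] at hs₀
  set s₁ := s₀.filter fun i => x ∈ Φ.cyl (q i)
  -- the words of the cubes containing `x` form a chain, so the longest one extends all others
  obtain ⟨i₀, hi₀, hmax⟩ := s₁.exists_max_image (fun i => (q i).length)
    (Finset.nonempty_of_sum_ne_zero (ne_bot_of_gt hs₀))
  have hx₀ : x ∈ Φ.cyl (q i₀) := (Finset.mem_filter.1 hi₀).2
  have hprefix : ∀ i ∈ s₁, q i <+: q i₀ := fun i hi => by
    rcases Φ.prefix_or_prefix_of_mem_cyl (Finset.mem_filter.1 hi).2 hx₀ with h | h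
    · exact h
    · rw [h.eq_of_length (le_antisymm h.length_le (hmax i hi))]
  refine ⟨q i₀, hx₀, hs₀.trans_le ?_⟩
  calc ∑ i ∈ s₁, c i = ∑ i ∈ s₁, if q i <+: q i₀ then c i else 0 :=
        Finset.sum_congr rfl fun i hi => (if_pos (hprefix i hi)).symm
    _ ≤ prefixWeight q c (q i₀) := by rw [prefixWeight]; convert ENNReal.sum_le_tsum s₁

variable {Φ q c} {F : Pt d → ℝ≥0∞}

theorem setOf_lt_subset_iUnion_cyl
    (hF : ∀ x ∈ Φ.K, F x ≤ ∑' i, (Φ.cyl (q i)).indicator (fun _ => c i) x) (t : ℝ≥0∞) :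
    {x ∈ Φ.K | t < F x} ⊆
      ⋃ u ∈ {u | t ∈ Ico (strictPrefixWeight q c u) (prefixWeight q c u)}, Φ.cyl u := by
  rintro x ⟨hxK, hxt⟩
  obtain ⟨u, hxu, hu⟩ := Φ.exists_mem_cyl_lt_prefixWeight q c (hxt.trans_le (hF x hxK))
  obtain ⟨v, hvu, hv, hmin⟩ := List.exists_minimal_prefix (t < prefixWeight q c ·) hu
  refine mem_biUnion ⟨?_, hv⟩ (Φ.cyl_anti hvu hxu)
  rcases eq_or_ne v [] with rfl | hne
  · simp [strictPrefixWeight_nil]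
  · exact (strictPrefixWeight_le_dropLast q c v).trans (not_lt.1 (hmin hne))

theorem choquetInt_hContent_le_tsum
    (hF : ∀ x ∈ Φ.K, F x ≤ ∑' i, (Φ.cyl (q i)).indicator (fun _ => c i) x) :
    choquetInt (Φ.hContent μ s α) Φ.K F ≤ ∑' i, c i * μ (Φ.cyl (q i)) ^ (α / s) := by
  set W : List (Fin m) → ℝ≥0∞ := fun u => μ (Φ.cyl u) ^ (α / s)
  set I : List (Fin m) → Set ℝ :=
    fun u => ENNReal.ofReal ⁻¹' Ico (strictPrefixWeight q c u) (prefixWeight q c u)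
  have hI : ∀ u, MeasurableSet (I u) := fun u => ENNReal.measurable_ofReal measurableSet_Ico
  calc choquetInt (Φ.hContent μ s α) Φ.K F
      ≤ ∫⁻ t in Ioi 0, ∑' u, (I u).indicator (fun _ => W u) t := by
        refine lintegral_mono fun t => ?_
        refine (Φ.hContent_le_of_subset_iUnion μ s α (to_countable _)
          (setOf_lt_subset_iUnion_cyl hF _)).trans_eq ?_
        exact tsum_subtype _ W
    _ = ∑' u, W u * volume (I u ∩ Ioi 0) := by
        rw [lintegral_tsum fun u => (measurable_const.indicator (hI u)).aemeasurable]
        refine tsum_congr fun u => ?_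
        rw [lintegral_indicator (hI u), setLIntegral_const, Measure.restrict_apply (hI u)]
    _ ≤ ∑' u, W u * wordWeight q c u := by
        gcongr with u
        simp only [I, prefixWeight_eq_add]
        exact ENNReal.volume_ofReal_preimage_Ico_inter_Ioi_le _ _
    _ = ∑' i, c i * W (q i) := tsum_mul_wordWeight q c W

end WeightedCubes

/-- The level sets `{g > ε k}`, each covered almost optimally by cubes of weight `ε`, dominate
`g`; apart from the first layer and the covering errors, the cost is a lower Riemann sum of
the Choquet integral. -/
theorem exists_weighted_cyl_cover (hK : Φ.hContent μ s α Φ.K ≠ ⊤) (g : Pt d → ℝ≥0∞)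
    {σ : ℝ≥0∞} (hσ : σ ≠ 0) :
    ∃ c : ℕ × List (Fin m) → ℝ≥0∞,
      (∀ x ∈ Φ.K, g x ≤ ∑' i, (Φ.cyl i.2).indicator (fun _ => c i) x) ∧
      ∑' i, c i * μ (Φ.cyl i.2) ^ (α / s) ≤ choquetInt (Φ.hContent μ s α) Φ.K g + σ := by
  set ν := Φ.hContent μ s α
  set φ : ℝ → ℝ≥0∞ := fun t => ν {x ∈ Φ.K | ENNReal.ofReal t < g x}
  have hφ : Antitone φ := fun t t' htt' => Φ.hContent_mono μ s α fun x hx =>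
    ⟨hx.1, (ENNReal.ofReal_le_ofReal htt').trans_lt hx.2⟩
  have hφK : ∀ t, φ t ≤ ν Φ.K := fun t => Φ.hContent_mono μ s α (sep_subset _ _)
  obtain ⟨ε', hε'0, hε'⟩ :=
    ENNReal.exists_nnreal_pos_mul_lt (ENNReal.add_ne_top.2 ⟨hK, ENNReal.one_ne_top⟩) hσ
  set ε : ℝ := (ε' : ℝ)
  have hε : ENNReal.ofReal ε = ε' := ENNReal.ofReal_coe_nnreal
  obtain ⟨δ, hδ0, hδ⟩ := ENNReal.exists_pos_sum_of_countable' one_ne_zero ℕ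
  choose C _ hCcov hCcost using fun k : ℕ =>
    Φ.exists_subset_iUnion_cyl_le_hContent_add μ s α (ne_top_of_le_ne_top hK (hφK (ε * k)))
      (hδ0 k).ne'
  refine ⟨fun i => (C i.1).indicator (fun _ => ENNReal.ofReal ε) i.2, fun x hx => ?_, ?_⟩
  · refine (ENNReal.le_tsum_ite_ofReal_mul_lt (g x) (NNReal.coe_pos.2 hε'0)).trans ?_
    rw [ENNReal.tsum_prod']
    refine ENNReal.tsum_le_tsum fun k => ?_
    split_ifs with hk
    · obtain ⟨w, hwC, hxw⟩ := mem_iUnion₂.1 (hCcov k ⟨hx, hk⟩)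
      refine le_trans (le_of_eq ?_) (ENNReal.le_tsum w)
      simp [hwC, hxw, hε]
    · exact zero_le
  · calc ∑' i : ℕ × List (Fin m), (C i.1).indicator (fun _ => ENNReal.ofReal ε) i.2 *
          μ (Φ.cyl i.2) ^ (α / s)
        = ∑' k, ENNReal.ofReal ε * ∑' w : C k, μ (Φ.cyl w) ^ (α / s) := by
          rw [ENNReal.tsum_prod']
          refine tsum_congr fun k => ?_
          rw [tsum_subtype (C k) fun w => μ (Φ.cyl w) ^ (α / s), ← ENNReal.tsum_mul_left]
          refine tsum_congr fun w => ?_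
          by_cases hw : w ∈ C k <;> simp [hw]
      _ ≤ ∑' k : ℕ, ENNReal.ofReal ε * (φ (ε * k) + δ k) := by
          gcongr with k
          exact hCcost k
      _ = ∑' k : ℕ, ENNReal.ofReal ε * φ (ε * k) + ENNReal.ofReal ε * ∑' k, δ k := by
          rw [← ENNReal.tsum_mul_left, ← ENNReal.tsum_add]
          exact tsum_congr fun k => mul_add _ _ _
      _ = ENNReal.ofReal ε * φ 0 + ∑' k : ℕ, ENNReal.ofReal ε * φ (ε * (k + 1)) +
            ENNReal.ofReal ε * ∑' k, δ k := by
          rw [tsum_eq_zero_add' ENNReal.summable]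
          simp only [Nat.cast_add, Nat.cast_one, Nat.cast_zero, mul_zero]
      _ ≤ ENNReal.ofReal ε * ν Φ.K + choquetInt ν Φ.K g + ENNReal.ofReal ε * 1 := by
          gcongr
          · exact hφK 0
          · exact hφ.tsum_ofReal_mul_le_lintegral_Ioi ε'.coe_nonneg
      _ = ε' * (ν Φ.K + 1) + choquetInt ν Φ.K g := by rw [hε]; ring
      _ ≤ choquetInt ν Φ.K g + σ := by rw [add_comm]; gcongr

end IFS

theorem choquet_countably_sublinear_general (d m : ℕ) (Φ : IFS d m) (p : Fin m → ℝ≥0∞)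
    (μ : Measure (Pt d)) (hμ : Φ.SelfSimilar p μ)
    (s : ℝ) (α : ℝ)
    (g : ℕ → Pt d → ℝ≥0∞) :
    choquetInt (Φ.hContent μ s α) Φ.K (fun x => ∑' j, g j x) ≤
      ∑' j, choquetInt (Φ.hContent μ s α) Φ.K (g j) := by
  obtain ⟨-, -, -, hμK, -⟩ := hμ
  have hK : Φ.hContent μ s α Φ.K ≠ ⊤ := by
    refine ne_top_of_le_ne_top ?_ (Φ.hContent_K_le μ s α)
    simp [hμK]
  refine ENNReal.le_of_forall_pos_le_add fun η hη _ => ?_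
  obtain ⟨σ, hσ0, hσ⟩ := ENNReal.exists_pos_sum_of_countable' (ENNReal.coe_ne_zero.2 hη.ne') ℕ
  choose c hdom hcost using fun j => Φ.exists_weighted_cyl_cover μ s α hK (g j) (hσ0 j).ne'
  calc choquetInt (Φ.hContent μ s α) Φ.K (fun x => ∑' j, g j x)
      ≤ ∑' i : ℕ × ℕ × List (Fin m), c i.1 i.2 * μ (Φ.cyl i.2.2) ^ (α / s) :=
        IFS.choquetInt_hContent_le_tsum μ s α fun x hx => by
          rw [ENNReal.tsum_prod']
          exact ENNReal.tsum_le_tsum fun j => hdom j x hx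
    _ = ∑' j, ∑' i, c j i * μ (Φ.cyl i.2) ^ (α / s) := ENNReal.tsum_prod'
    _ ≤ ∑' j, (choquetInt (Φ.hContent μ s α) Φ.K (g j) + σ j) := ENNReal.tsum_le_tsum hcost
    _ ≤ ∑' j, choquetInt (Φ.hContent μ s α) Φ.K (g j) + η := by
        rw [ENNReal.tsum_add]; gcongr

/-- Countable sublinearity of the Choquet integral with respect to `H^α_μ`. -/
theorem choquet_countably_sublinear (d m : ℕ) (Φ : IFS d m) (p : Fin m → ℝ≥0∞)
    (μ : Measure (Pt d)) (hμ : Φ.SelfSimilar p μ)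
    (s : ℝ) (hs : 0 < s) (hdim : ∑ i, Φ.r i ^ s = 1)
    (α : ℝ) (hα : 0 < α) (hαs : α ≤ s)
    (g : ℕ → Pt d → ℝ≥0∞) (hg : ∀ j, Measurable (g j)) :
    choquetInt (Φ.hContent μ s α) Φ.K (fun x => ∑' j, g j x) ≤
      ∑' j, choquetInt (Φ.hContent μ s α) Φ.K (g j) :=
  choquet_countably_sublinear_general d m Φ p μ hμ s α g
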